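/- Let n ≥ 1 and t ≥ 1. The presented group with generators a_1, b_1, …, a_{2t}, b_{2t} and relators c_{2t}, c_t, the words a_k a_{2t+1−k}, b_k a_{2t+1−k} b_{2t+1−k} a_{2t+1−k}^{-1}, a_{2t+1−k} a_k, and b_{2t+1−k} a_{2t+1−k}^{-1} b_k a_{2t+1−k} for each 1 ≤ k ≤ t, together with the relators a_1, a_2, …, a_{t−1}, a_t^n, b_{t+2}, b_{t+3}, …, b_{2t}, is isomorphic to ℤ × ℤ/nℤ. -/

import Mathlib

namespace Paper

/-- The free group `F_g` on the `2g` generators `a_1, b_1, …, a_g, b_g`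
(the pair `(i, false)` is `a_{i+1}`, the pair `(i, true)` is `b_{i+1}`). -/
abbrev F (g : ℕ) := FreeGroup (Fin g × Bool)

/-- The generator `a_i` of `F_g`, for `1 ≤ i ≤ g`; by convention `a_i = 1` for out-of-range
indices (in particular `a_{g+1} = 1`). -/
def a (g i : ℕ) : F g :=
  if h : 1 ≤ i ∧ i ≤ g then FreeGroup.of (⟨i - 1, by omega⟩, false) else 1

/-- The generator `b_i` of `F_g`, for `1 ≤ i ≤ g`. -/
def b (g i : ℕ) : F g :=
  if h : 1 ≤ i ∧ i ≤ g then FreeGroup.of (⟨i - 1, by omega⟩, true) else 1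

/-- The word `c_i = b_i⁻¹ ⋯ b_2⁻¹ b_1⁻¹ (a_1 b_1 a_1⁻¹)(a_2 b_2 a_2⁻¹) ⋯ (a_i b_i a_i⁻¹)`,
with `c_0 = 1`. -/
def c (g i : ℕ) : F g :=
  (((List.range i).reverse.map fun j => (b g (j + 1))⁻¹).prod) *
    (((List.range i).map fun j => a g (j + 1) * b g (j + 1) * (a g (j + 1))⁻¹).prod)

/-- The product `b_i b_{i+1} ⋯ b_j`. -/
def prodb (g i j : ℕ) : F g := ((List.range (j + 1 - i)).map fun l => b g (i + l)).prod

/-- `B^h_{0,1} = b_1 b_2 ⋯ b_h`. -/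
def B01 (g h : ℕ) : F g := prodb g 1 h

/-- `B^h_{0,2} = b_1 b_2 ⋯ b_h · c_h a_{h+1}`. -/
def B02 (g h : ℕ) : F g := prodb g 1 h * c g h * a g (h + 1)

/-- `B^h_{0,s}` for `s = 1, 2`. -/
def B0 (g s h : ℕ) : F g := if s = 1 then B01 g h else B02 g h

/-- `B^h_{2k-1} = a_k · b_k b_{k+1} ⋯ b_{h+1-k} · c_{h+1-k} a_{h+1-k}`. -/
def Bodd (g h k : ℕ) : F g :=
  a g k * prodb g k (h + 1 - k) * c g (h + 1 - k) * a g (h + 1 - k)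

/-- `B^h_{2k} = a_k · b_{k+1} b_{k+2} ⋯ b_{h-k} · c_{h-k} a_{h+1-k}`. -/
def Beven (g h k : ℕ) : F g :=
  a g k * prodb g (k + 1) (h - k) * c g (h - k) * a g (h + 1 - k)

/-- The set of words `ℬ^h_s`: it consists of `B^h_{0,s}, B^h_1, …, B^h_h` (the odd-indexed
`B^h_{2k-1}` for `2k - 1 ≤ h` and the even-indexed `B^h_{2k}` for `2k ≤ h`), together with
`a_{r+1}` and `c_r a_{r+1}` when `h = 2r + 1` is odd. -/
def Bset (g s h : ℕ) : Set (F g) :=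
  {B0 g s h}
    ∪ {w | ∃ k, 1 ≤ k ∧ 2 * k - 1 ≤ h ∧ w = Bodd g h k}
    ∪ {w | ∃ k, 1 ≤ k ∧ 2 * k ≤ h ∧ w = Beven g h k}
    ∪ (if h % 2 = 1 then {a g (h / 2 + 1), c g (h / 2) * a g (h / 2 + 1)} else (∅ : Set (F g)))

/-- The genus-`g` surface group `π_g`, presented with generators `a_1, b_1, …, a_g, b_g`
and the single relator `c_g`. -/
abbrev pi (g : ℕ) := PresentedGroup ({c g g} : Set (F g))

/-- The natural projection `F_g → π_g`. -/
abbrev toPi (g : ℕ) : F g →* pi g := PresentedGroup.mk _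

/-- The quotient of `π_g` by the normal closure of the images of a set `S` of words. -/
abbrev quotBy (g : ℕ) (S : Set (F g)) :=
  pi g ⧸ Subgroup.normalClosure (toPi g '' S)

/-- The projection `π_g → π_g / N(S)`. -/
abbrev projBy (g : ℕ) (S : Set (F g)) : pi g →* quotBy g S :=
  QuotientGroup.mk' _

/-- The relators of Statement 12, in the free group on `a_1, b_1, …, a_{2t}, b_{2t}`:
`c_{2t}`, `c_t`, for each `1 ≤ k ≤ t` the words `a_k a_{2t+1-k}`,
`b_k a_{2t+1-k} b_{2t+1-k} a_{2t+1-k}⁻¹`, `a_{2t+1-k} a_k` and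
`b_{2t+1-k} a_{2t+1-k}⁻¹ b_k a_{2t+1-k}`, together with
`a_1, a_2, …, a_{t-1}`, `a_t^n` and `b_{t+2}, b_{t+3}, …, b_{2t}`. -/
def rels12 (t n : ℕ) : Set (F (2 * t)) :=
  {c (2 * t) (2 * t), c (2 * t) t}
    ∪ {w | ∃ k, 1 ≤ k ∧ k ≤ t ∧
        (w = a (2 * t) k * a (2 * t) (2 * t + 1 - k) ∨
          w = b (2 * t) k * a (2 * t) (2 * t + 1 - k) * b (2 * t) (2 * t + 1 - k) *
                (a (2 * t) (2 * t + 1 - k))⁻¹ ∨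
          w = a (2 * t) (2 * t + 1 - k) * a (2 * t) k ∨
          w = b (2 * t) (2 * t + 1 - k) * (a (2 * t) (2 * t + 1 - k))⁻¹ * b (2 * t) k *
                a (2 * t) (2 * t + 1 - k))}
    ∪ {w | ∃ k, 1 ≤ k ∧ k ≤ t - 1 ∧ w = a (2 * t) k}
    ∪ {a (2 * t) t ^ n}
    ∪ {w | ∃ k, t + 2 ≤ k ∧ k ≤ 2 * t ∧ w = b (2 * t) k}

/-!
Write `dipole t x` for `k ↦ x` at `k = t`, `x⁻¹` at `k = t + 1` and `1` elsewhere. In the presented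
group `G` the relators `a_k` (`k < t`), `b_k` (`k > t + 1`) and the four families pairing `k` with
`2t + 1 - k` force `a_k = dipole t a_t k` and `b_k = dipole t b_t k`. Then `c_t` reduces to
`b_t⁻¹ a_t b_t a_t⁻¹`, so `a_t` and `b_t` commute; with `a_t ^ n = 1` this gives a homomorphism
`ℤ × ℤ/n → G`, `(1, 0) ↦ b_t`, `(0, 1) ↦ a_t`. Conversely, the dipole assignments of `(0, 1)` to
the `a_k` and of `(1, 0)` to the `b_k` kill every relator (each `c_i` dies in an abelian group),
and the two homomorphisms are mutually inverse.
-/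

section Words

variable {g : ℕ}

@[simp] lemma a_zero : a g 0 = 1 := rfl

@[simp] lemma b_zero : b g 0 = 1 := rfl

lemma a_of_lt {k : ℕ} (hk : g < k) : a g k = 1 := dif_neg (by omega)

lemma b_of_lt {k : ℕ} (hk : g < k) : b g k = 1 := dif_neg (by omega)

lemma a_val_succ (i : Fin g) : a g (i + 1) = FreeGroup.of (i, false) := by
  rw [a, dif_pos (by omega)]
  rfl

lemma b_val_succ (i : Fin g) : b g (i + 1) = FreeGroup.of (i, true) := by
  rw [b, dif_pos (by omega)]
  rfl

@[simp] lemma c_zero : c g 0 = 1 := by simp [c]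

lemma c_succ (m : ℕ) :
    c g (m + 1) = (b g (m + 1))⁻¹ * c g m * (a g (m + 1) * b g (m + 1) * (a g (m + 1))⁻¹) := by
  simp [c, List.range_succ, mul_assoc]

lemma map_c_eq_one_of_commGroup {M : Type*} [CommGroup M] (φ : F g →* M) (m : ℕ) :
    φ (c g m) = 1 := by
  induction m with
  | zero => simp
  | succ m ih => simp [c_succ, ih]

lemma map_c_eq_one {H : Type*} [Group H] (φ : F g →* H) {m : ℕ}
    (ha : ∀ k ≤ m, φ (a g k) = 1) (hb : ∀ k ≤ m, φ (b g k) = 1) : φ (c g m) = 1 := by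
  induction m with
  | zero => simp
  | succ m ih =>
    simp [c_succ, ih (fun k hk => ha k (by omega)) (fun k hk => hb k (by omega)), ha, hb]

end Words

section Dipole

variable {H : Type*} [Group H] {t : ℕ}

def dipole (t : ℕ) (x : H) (k : ℕ) : H := if k = t then x else if k = t + 1 then x⁻¹ else 1

@[simp] lemma dipole_self (x : H) : dipole t x t = x := if_pos rfl

@[simp] lemma dipole_succ (x : H) : dipole t x (t + 1) = x⁻¹ := by simp [dipole]

lemma dipole_of_ne (x : H) {k : ℕ} (h₀ : k ≠ t) (h₁ : k ≠ t + 1) : dipole t x k = 1 := by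
  simp [dipole, h₀, h₁]

lemma map_dipole {K : Type*} [Group K] (f : H →* K) (x : H) (k : ℕ) :
    f (dipole t x k) = dipole t (f x) k := by
  unfold dipole
  split_ifs <;> simp

lemma dipole_reflect (x : H) {k : ℕ} (hk : 1 ≤ k) (hkt : k ≤ t) :
    dipole t x (2 * t + 1 - k) = (dipole t x k)⁻¹ := by
  rcases eq_or_lt_of_le hkt with rfl | hlt
  · rw [show 2 * k + 1 - k = k + 1 by omega, dipole_succ, dipole_self]
  · rw [dipole_of_ne x (by omega) (by omega), dipole_of_ne x (by omega) (by omega), inv_one]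

def dipoleGens (g t : ℕ) (xa xb : H) : Fin g × Bool → H :=
  fun p => dipole t (bif p.2 then xb else xa) (p.1 + 1)

lemma lift_dipoleGens_a {g : ℕ} (ht : 1 ≤ t) (htg : t < g) (xa xb : H) (k : ℕ) :
    FreeGroup.lift (dipoleGens g t xa xb) (a g k) = dipole t xa k := by
  unfold a
  split_ifs with hk
  · simp [dipoleGens, Nat.sub_add_cancel hk.1]
  · rw [map_one, dipole_of_ne _ (by omega) (by omega)]

lemma lift_dipoleGens_b {g : ℕ} (ht : 1 ≤ t) (htg : t < g) (xa xb : H) (k : ℕ) :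
    FreeGroup.lift (dipoleGens g t xa xb) (b g k) = dipole t xb k := by
  unfold b
  split_ifs with hk
  · simp [dipoleGens, Nat.sub_add_cancel hk.1]
  · rw [map_one, dipole_of_ne _ (by omega) (by omega)]

end Dipole

lemma map_rels12_eq_one_of_dipole {M : Type*} [CommGroup M] {t n : ℕ} (φ : F (2 * t) →* M)
    {x y : M} (ha : ∀ k, φ (a (2 * t) k) = dipole t x k) (hb : ∀ k, φ (b (2 * t) k) = dipole t y k)
    (hx : x ^ n = 1) : ∀ r ∈ rels12 t n, φ r = 1 := by
  rintro r (((((hc | hc) | ⟨k, hk, hkt, hr⟩) | ⟨k, hk, hkt, rfl⟩) | rfl) | ⟨k, hk, hkt, rfl⟩)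
  · rw [hc, map_c_eq_one_of_commGroup]
  · rw [hc, map_c_eq_one_of_commGroup]
  · rcases hr with rfl | rfl | rfl | rfl <;>
      simp only [map_mul, map_inv, ha, hb, dipole_reflect _ hk hkt] <;>
      simp [mul_comm, mul_left_comm]
  · rw [ha, dipole_of_ne _ (by omega) (by omega)]
  · rw [map_pow, ha, dipole_self, hx]
  · rw [hb, dipole_of_ne _ (by omega) (by omega)]

section Relations

variable {H : Type*} [Group H] {t n : ℕ} {π : F (2 * t) →* H}

lemma map_a_of_lt (hπ : ∀ r ∈ rels12 t n, π r = 1) {k : ℕ} (hk : k < t) :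
    π (a (2 * t) k) = 1 := by
  rcases Nat.eq_zero_or_pos k with rfl | hk₀
  · simp
  · exact hπ _ (.inl <| .inl <| .inr ⟨k, hk₀, by omega, rfl⟩)

lemma map_b_of_gt (hπ : ∀ r ∈ rels12 t n, π r = 1) {k : ℕ} (hk : t + 1 < k) :
    π (b (2 * t) k) = 1 := by
  rcases le_or_gt k (2 * t) with hkt | hkt
  · exact hπ _ (.inr ⟨k, hk, hkt, rfl⟩)
  · simp [b_of_lt hkt]

lemma map_a_pow (hπ : ∀ r ∈ rels12 t n, π r = 1) : π (a (2 * t) t) ^ n = 1 := by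
  rw [← map_pow]
  exact hπ _ (.inl <| .inr rfl)

lemma map_a_mul_map_a_reflect (hπ : ∀ r ∈ rels12 t n, π r = 1) {k : ℕ} (hk : 1 ≤ k)
    (hkt : k ≤ t) : π (a (2 * t) k) * π (a (2 * t) (2 * t + 1 - k)) = 1 := by
  rw [← map_mul]
  exact hπ _ (.inl <| .inl <| .inl <| .inr ⟨k, hk, hkt, .inl rfl⟩)

lemma map_b_conj_reflect (hπ : ∀ r ∈ rels12 t n, π r = 1) {k : ℕ} (hk : 1 ≤ k)
    (hkt : k ≤ t) :
    π (b (2 * t) k) * π (a (2 * t) (2 * t + 1 - k)) * π (b (2 * t) (2 * t + 1 - k)) *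
      (π (a (2 * t) (2 * t + 1 - k)))⁻¹ = 1 := by
  rw [← map_inv, ← map_mul, ← map_mul, ← map_mul]
  exact hπ _ (.inl <| .inl <| .inl <| .inr ⟨k, hk, hkt, .inr <| .inl rfl⟩)

lemma map_a_of_gt (hπ : ∀ r ∈ rels12 t n, π r = 1) {k : ℕ} (hk : t + 1 < k) :
    π (a (2 * t) k) = 1 := by
  rcases le_or_gt k (2 * t) with hkt | hkt
  · have h := map_a_mul_map_a_reflect hπ (k := 2 * t + 1 - k) (by omega) (by omega)
    rwa [map_a_of_lt hπ (by omega), one_mul, show 2 * t + 1 - (2 * t + 1 - k) = k by omega]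
      at h
  · simp [a_of_lt hkt]

lemma map_a_succ (hπ : ∀ r ∈ rels12 t n, π r = 1) (ht : 1 ≤ t) :
    π (a (2 * t) (t + 1)) = (π (a (2 * t) t))⁻¹ := by
  have h := map_a_mul_map_a_reflect hπ ht le_rfl
  rw [show 2 * t + 1 - t = t + 1 by omega] at h
  exact eq_inv_of_mul_eq_one_right h

lemma map_b_of_lt (hπ : ∀ r ∈ rels12 t n, π r = 1) {k : ℕ} (hk : k < t) :
    π (b (2 * t) k) = 1 := by
  rcases Nat.eq_zero_or_pos k with rfl | hk₀
  · simp
  · have h := map_b_conj_reflect hπ hk₀ hk.le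
    rwa [map_a_of_gt hπ (by omega), map_b_of_gt hπ (k := 2 * t + 1 - k) (by omega), mul_one,
      mul_one, inv_one, mul_one] at h

lemma commute_map_a_map_b (hπ : ∀ r ∈ rels12 t n, π r = 1) (ht : 1 ≤ t) :
    Commute (π (a (2 * t) t)) (π (b (2 * t) t)) := by
  obtain ⟨m, rfl⟩ : ∃ m, t = m + 1 := ⟨t - 1, by omega⟩
  have hc : π (c (2 * (m + 1)) m) = 1 :=
    map_c_eq_one π (fun _ hk => map_a_of_lt hπ (by omega)) (fun _ hk => map_b_of_lt hπ (by omega))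
  have h : π (c (2 * (m + 1)) (m + 1)) = 1 := hπ _ (.inl <| .inl <| .inl <| .inl <| .inr rfl)
  simp only [c_succ, map_mul, map_inv, hc, mul_one, inv_mul_eq_one] at h
  exact mul_inv_eq_iff_eq_mul.mp h.symm

lemma map_b_succ (hπ : ∀ r ∈ rels12 t n, π r = 1) (ht : 1 ≤ t) :
    π (b (2 * t) (t + 1)) = (π (b (2 * t) t))⁻¹ := by
  have h := map_b_conj_reflect hπ ht le_rfl
  rw [show 2 * t + 1 - t = t + 1 by omega, map_a_succ hπ ht, inv_inv] at h
  set A := π (a (2 * t) t)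
  set B := π (b (2 * t) t)
  calc π (b (2 * t) (t + 1))
      = A * B⁻¹ * (B * A⁻¹ * π (b (2 * t) (t + 1)) * A) * A⁻¹ := by group
    _ = B⁻¹ := by
      rw [h, mul_one, (commute_map_a_map_b hπ ht).inv_right.eq, mul_inv_cancel_right]

lemma map_a_eq_dipole (hπ : ∀ r ∈ rels12 t n, π r = 1) (ht : 1 ≤ t) (k : ℕ) :
    π (a (2 * t) k) = dipole t (π (a (2 * t) t)) k := by
  unfold dipole
  split_ifs with h₀ h₁
  · rw [h₀]
  · rw [h₁, map_a_succ hπ ht]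
  · rcases lt_or_gt_of_ne h₀ with hk | hk
    · exact map_a_of_lt hπ hk
    · exact map_a_of_gt hπ (by omega)

lemma map_b_eq_dipole (hπ : ∀ r ∈ rels12 t n, π r = 1) (ht : 1 ≤ t) (k : ℕ) :
    π (b (2 * t) k) = dipole t (π (b (2 * t) t)) k := by
  unfold dipole
  split_ifs with h₀ h₁
  · rw [h₀]
  · rw [h₁, map_b_succ hπ ht]
  · rcases lt_or_gt_of_ne h₀ with hk | hk
    · exact map_b_of_lt hπ hk
    · exact map_b_of_gt hπ (by omega)

end Relations

section HomFromIntProdZMod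

variable {H : Type*} [Group H] {n : ℕ}

def zmodPowersHom (x : H) (hx : x ^ n = 1) : Multiplicative (ZMod n) →* H :=
  AddMonoidHom.toMultiplicativeLeft <|
    ZMod.lift n ⟨zmultiplesHom (Additive H) (Additive.ofMul x), by simp [← ofMul_pow, hx]⟩

lemma zmodPowersHom_ofAdd_intCast (x : H) (hx : x ^ n = 1) (m : ℤ) :
    zmodPowersHom x hx (.ofAdd (m : ZMod n)) = x ^ m := by
  simp [zmodPowersHom]

def intProdZModHom (y x : H) (hxy : Commute y x) (hx : x ^ n = 1) :
    Multiplicative ℤ × Multiplicative (ZMod n) →* H :=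
  (zpowersHom H y).noncommCoprod (zmodPowersHom x hx) fun k w => by
    obtain ⟨m, hm⟩ := ZMod.intCast_surjective w.toAdd
    rw [zpowersHom_apply, ← ofAdd_toAdd w, ← hm, zmodPowersHom_ofAdd_intCast]
    exact hxy.zpow_zpow k.toAdd m

lemma intProdZModHom_apply (y x : H) (hxy : Commute y x) (hx : x ^ n = 1) (k m : ℤ) :
    intProdZModHom y x hxy hx (.ofAdd k, .ofAdd (m : ZMod n)) = y ^ k * x ^ m := by
  simp [intProdZModHom, MonoidHom.noncommCoprod_apply, zmodPowersHom_ofAdd_intCast]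

end HomFromIntProdZMod

theorem G3_presentation_iso_general (n t : ℕ) (ht : 1 ≤ t) :
    Nonempty (PresentedGroup (rels12 t n) ≃*
      Multiplicative ℤ × Multiplicative (ZMod n)) := by
  set π := PresentedGroup.mk (rels12 t n)
  have hπ : ∀ r ∈ rels12 t n, π r = 1 := fun r hr => PresentedGroup.one_of_mem hr
  set A := π (a (2 * t) t)
  set B := π (b (2 * t) t)
  let α : Multiplicative ℤ × Multiplicative (ZMod n) := (1, .ofAdd 1)
  let β : Multiplicative ℤ × Multiplicative (ZMod n) := (.ofAdd 1, 1)
  have hα : α ^ n = 1 := Prod.ext (one_pow n) (by simp [α, ← ofAdd_nsmul])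
  have hta : t < 2 * t := by omega
  let f := PresentedGroup.toGroup <| map_rels12_eq_one_of_dipole _
    (lift_dipoleGens_a ht hta α β) (lift_dipoleGens_b ht hta α β) hα
  let g := intProdZModHom B A (commute_map_a_map_b hπ ht).symm (map_a_pow hπ)
  have hfα : f A = α := (lift_dipoleGens_a ht hta α β t).trans (dipole_self α)
  have hfβ : f B = β := (lift_dipoleGens_b ht hta α β t).trans (dipole_self β)
  have hgα : g α = A := by simpa using intProdZModHom_apply B A _ _ 0 1
  have hgβ : g β = B := by simpa using intProdZModHom_apply B A _ _ 1 0
  refine ⟨MonoidHom.toMulEquiv f g (PresentedGroup.ext ?_) (MonoidHom.ext ?_)⟩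
  · rintro ⟨i, _ | _⟩ <;> rw [MonoidHom.comp_apply, PresentedGroup.toGroup.of]
    · show g (dipole t α (i + 1)) = π (.of (i, false))
      rw [map_dipole, hgα, ← map_a_eq_dipole hπ ht, a_val_succ]
    · show g (dipole t β (i + 1)) = π (.of (i, true))
      rw [map_dipole, hgβ, ← map_b_eq_dipole hπ ht, b_val_succ]
  · rintro ⟨z, w⟩
    obtain ⟨m, hm⟩ := ZMod.intCast_surjective w.toAdd
    rw [← ofAdd_toAdd z, ← ofAdd_toAdd w, ← hm, MonoidHom.comp_apply, intProdZModHom_apply,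
      map_mul, map_zpow, map_zpow, hfα, hfβ]
    exact Prod.ext (by simp [α, β, ← ofAdd_zsmul]) (by simp [α, β, ← ofAdd_zsmul])

/-- For `n ≥ 1` and `t ≥ 1`, the group presented with generators
`a_1, b_1, …, a_{2t}, b_{2t}` and the relators listed in `rels12` is isomorphic to
`ℤ × ℤ/nℤ`. -/
theorem G3_presentation_iso (n t : ℕ) (hn : 1 ≤ n) (ht : 1 ≤ t) :
    Nonempty (PresentedGroup (rels12 t n) ≃*
      Multiplicative ℤ × Multiplicative (ZMod n)) :=
  G3_presentation_iso_general n t ht
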